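/- arXiv:1301.0526 — 2 statements merged into one kernel-verified Lean document; each statement's English description precedes it below -/
import Mathlib

section
/- Fix α, β ∈ ℂ with α ≠ 0, and n ∈ ℤ. For γ ∈ {0, 1}, let φ_n^{(α,γ)} : U(Vir_−) → ℂ be the linear map determined by φ_n^{(α,γ)}(1) = 1 and φ_n^{(α,γ)}(d_{−k} P) = −(α + n + k − deg(P) − kγ) φ_n^{(α,γ)}(P) for homogeneous P. If α + n ≠ 0, then for every homogeneous element P ∈ U(Vir_−), (α + n)·φ_n^{(α,0)}(P) = (α + n − deg(P))·φ_n^{(α,1)}(P). -/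
/-- `-deg` on words in the generators `d_{-k}` of `U(Vir₋)`: `deg(d_{-k}) = -k`. -/
def sumL (P : List ℕ+) : ℕ := (P.map fun j => (j : ℕ)).sum

/-- The linear map `φ_n : U(Vir₋) → ℂ` (with `φ_n(1) = 1` and
`φ_n(d_{-k} P) = -(α + n + k - deg P - kβ) φ_n(P)` for homogeneous `P`), evaluated
on the PBW-type monomials `d_{-k_r} ⋯ d_{-k_1}`, encoded as words `[k_r, …, k_1]`;
since `φ_n` is linear and well defined on `U(Vir₋)`, its values on these monomials
determine it completely. -/
noncomputable def phiW (α β n : ℂ) : List ℕ+ → ℂ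
  | [] => 1
  | k :: P => -(α + n + ((k : ℕ) : ℂ) + ((sumL P : ℕ) : ℂ) - ((k : ℕ) : ℂ) * β)
      * phiW α β n P

theorem sumL_cons (k : ℕ+) (P : List ℕ+) : sumL (k :: P) = (k : ℕ) + sumL P := by
  simp [sumL]

/-- For `β = 1` the `k`-dependence of the recursion cancels, leaving the factor
`-(α + n - deg P)`, which is exactly the factor relating consecutive values of the identity. -/
theorem add_mul_phiW_zero (α n : ℂ) (P : List ℕ+) :
    (α + n) * phiW α 0 n P = (α + n + (sumL P : ℂ)) * phiW α 1 n P := by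
  induction P with
  | nil => simp [phiW, sumL]
  | cons k P ih =>
    calc (α + n) * phiW α 0 n (k :: P)
        = -(α + n + (k : ℕ) + sumL P) * ((α + n) * phiW α 0 n P) := by
          rw [phiW]; ring
      _ = -(α + n + (k : ℕ) + sumL P) * ((α + n + sumL P) * phiW α 1 n P) := by rw [ih]
      _ = (α + n + (sumL (k :: P) : ℂ)) * phiW α 1 n (k :: P) := by
          rw [phiW, sumL_cons]; push_cast; ring

theorem stmt_8_general (α : ℂ) (n : ℤ) :
    ∀ P : List ℕ+,
      (α + (n : ℂ)) * phiW α 0 (n : ℂ) P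
        = (α + (n : ℂ) + ((sumL P : ℕ) : ℂ)) * phiW α 1 (n : ℂ) P :=
  add_mul_phiW_zero α n

/-- for `α ≠ 0` and `α + n ≠ 0`, the maps `φ_n^{(α,0)}` and
`φ_n^{(α,1)}` (the cases `β = 0` and `β = 1`) satisfy, for every homogeneous
`P ∈ U(Vir₋)` (checked on the spanning monomials, `deg P = -sumL P`):
`(α + n)·φ_n^{(α,0)}(P) = (α + n − deg P)·φ_n^{(α,1)}(P)`. -/
theorem stmt_8 (α : ℂ) (n : ℤ) (hα : α ≠ 0) (hαn : α + (n : ℂ) ≠ 0) :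
    ∀ P : List ℕ+,
      (α + (n : ℂ)) * phiW α 0 (n : ℂ) P
        = (α + (n : ℂ) + ((sumL P : ℕ) : ℂ)) * phiW α 1 (n : ℂ) P :=
  stmt_8_general α n
end

section
/- Fix α, β ∈ ℂ and let φ_n : U(Vir_−) → ℂ be defined by φ_n(1) = 1 and φ_n(d_{−k}P) = −(α + n + k − deg(P) − kβ)φ_n(P) for homogeneous P. Let Q₁ = 4 d_{−1}² + 3 d_{−2} and Q₂ = 144 d_{−1}⁴ + 600 d_{−2} d_{−1}² + 264 d_{−3} d_{−1} + 49 d_{−2}² + 36 d_{−4}. Then φ_n(Q₁) = (4α − 8β + 9 + 4n)(α + n) + 2(2β − 1)(β − 1), and there exists a polynomial q(n) ∈ ℂ[n] (with coefficients depending on α, β) such that φ_n(Q₂) = φ_n(Q₁)·q(n) − 20(α + n)(16β − 15) for all n. -/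
open Polynomial

section

variable (α β n : ℂ)

theorem phiW_Q₁ :
    4 * phiW α β n [1, 1] + 3 * phiW α β n [2]
      = (4 * α - 8 * β + 9 + 4 * n) * (α + n) + 2 * (2 * β - 1) * (β - 1) := by
  norm_num [phiW, sumL]
  ring

noncomputable def quotientQ₂ : ℂ[X] :=
  C 36 * X ^ 2 + C (72 * α - 72 * β + 129) * X
    + C (36 * α ^ 2 - 72 * α * β + 36 * β ^ 2 + 129 * α - 6 * β - 20)

theorem phiW_Q₂ :
    144 * phiW α β n [1, 1, 1, 1] + 600 * phiW α β n [2, 1, 1]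
        + 264 * phiW α β n [3, 1] + 49 * phiW α β n [2, 2] + 36 * phiW α β n [4]
      = ((4 * α - 8 * β + 9 + 4 * n) * (α + n) + 2 * (2 * β - 1) * (β - 1))
          * (quotientQ₂ α β).eval n - 20 * (α + n) * (16 * β - 15) := by
  simp only [quotientQ₂, eval_add, eval_mul, eval_pow, eval_C, eval_X]
  norm_num [phiW, sumL]
  ring

end

/-- for `Q₁ = 4 d_{-1}² + 3 d_{-2}` and
`Q₂ = 144 d_{-1}⁴ + 600 d_{-2} d_{-1}² + 264 d_{-3} d_{-1} + 49 d_{-2}² + 36 d_{-4}`,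
we have `φ_n(Q₁) = (4α - 8β + 9 + 4n)(α + n) + 2(2β - 1)(β - 1)`, and there exists a
polynomial `q` (with coefficients depending on `α, β`) such that
`φ_n(Q₂) = φ_n(Q₁)·q(n) - 20(α + n)(16β - 15)` for all `n`. -/
theorem stmt_16 (α β : ℂ) :
    (∀ n : ℂ, 4 * phiW α β n [1, 1] + 3 * phiW α β n [2]
      = (4 * α - 8 * β + 9 + 4 * n) * (α + n) + 2 * (2 * β - 1) * (β - 1))
    ∧ ∃ q : Polynomial ℂ, ∀ n : ℂ,
        144 * phiW α β n [1, 1, 1, 1] + 600 * phiW α β n [2, 1, 1]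
            + 264 * phiW α β n [3, 1] + 49 * phiW α β n [2, 2] + 36 * phiW α β n [4]
          = (4 * phiW α β n [1, 1] + 3 * phiW α β n [2]) * q.eval n
            - 20 * (α + n) * (16 * β - 15) := by
  refine ⟨phiW_Q₁ α β, quotientQ₂ α β, fun n => ?_⟩
  rw [phiW_Q₁, phiW_Q₂]
end
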